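/- For fixed n ≥ 2, the function m ↦ p(n,m) = r^(n-1) + ((m-1)/(m-r))·((r/m)^(n-1) − 1), with r = (m-1)/m^n + 1, is strictly decreasing in the integer m ≥ 2. -/

import Mathlib

/-- `r` parameter of Wiese–Heinrich Theorem 1. -/
noncomputable def rWH (n m : ℕ) : ℝ := ((m : ℝ) - 1) / (m : ℝ) ^ n + 1

/-- Frequency of n-player, m-strategy games with a unique pure Nash equilibrium. -/
noncomputable def pWH (n m : ℕ) : ℝ :=
  rWH n m ^ (n - 1) +
    (((m : ℝ) - 1) / ((m : ℝ) - rWH n m)) * ((rWH n m / (m : ℝ)) ^ (n - 1) - 1)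

/-- Closed-form simplification: `p = (r^n - 1) * m^n / (m^n - 1)`. -/
lemma pWH_eq (n m : ℕ) (hn : 1 ≤ n) (hm : 2 ≤ m) :
    pWH n m = (rWH n m ^ n - 1) * ((m : ℝ) ^ n / ((m : ℝ) ^ n - 1)) := by
  obtain ⟨k, rfl⟩ := Nat.exists_eq_add_of_le hn
  have hM : (2 : ℝ) ≤ (m : ℝ) := by exact_mod_cast hm
  have hM0 : (m : ℝ) ≠ 0 := by linarith
  have hM1 : (m : ℝ) - 1 ≠ 0 := by linarith
  have hApos : (1 : ℝ) < (m : ℝ) ^ (1 + k) := by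
    apply one_lt_pow₀ (by linarith) (by omega)
  have hA0 : (m : ℝ) ^ (1 + k) ≠ 0 := by positivity
  have hA1 : (m : ℝ) ^ (1 + k) - 1 ≠ 0 := by linarith
  have hmr : (m : ℝ) - rWH (1 + k) m =
      ((m : ℝ) - 1) * ((m : ℝ) ^ (1 + k) - 1) / (m : ℝ) ^ (1 + k) := by
    unfold rWH; field_simp; ring
  have hmr0 : (m : ℝ) - rWH (1 + k) m ≠ 0 := by
    rw [hmr]
    exact div_ne_zero (mul_ne_zero hM1 hA1) hA0
  unfold pWH
  rw [hmr]
  unfold rWH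
  simp only [Nat.add_sub_cancel_left]
  have e : ((m:ℝ) - 1) / (((m:ℝ) - 1) * ((m : ℝ) ^ (1 + k) - 1) / (m : ℝ) ^ (1 + k)) = (m : ℝ) ^ (1 + k) / ((m : ℝ) ^ (1 + k) - 1) := by
    field_simp
  rw [e, div_add_one hA0, div_pow, div_pow, pow_add, pow_one] at *
  generalize hX : (m:ℝ)^k = X at *
  have hX0 : X ≠ 0 := by rw [← hX]; positivity
  generalize hY : ((m:ℝ) - 1 + m * X) = Y
  rw [div_pow, div_pow]
  field_simp
  rw [← hY, ← hX]
  ring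

lemma qstep (n : ℕ) (hn : 2 ≤ n) (x : ℝ) (hx : 2 ≤ x) :
    (x + 1 - 1) / (x + 1) ^ n < (x - 1) / x ^ n := by
  obtain ⟨j, rfl⟩ := Nat.exists_eq_add_of_le hn
  have hxp : (0:ℝ) < x := by linarith
  have hx1p : (0:ℝ) < x + 1 := by linarith
  rw [div_lt_div_iff₀ (by positivity) (by positivity)]
  have h1 : x ^ j ≤ (x + 1) ^ j := by
    apply pow_le_pow_left₀ (le_of_lt hxp) (by linarith)
  have h2 : (1:ℝ) ≤ x ^ j := one_le_pow₀ (by linarith)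
  have e1 : x ^ (2 + j) = x ^ j * x ^ 2 := by ring
  have e2 : (x + 1) ^ (2 + j) = (x + 1) ^ j * (x + 1) ^ 2 := by ring
  rw [e1, e2]
  nlinarith [mul_le_mul_of_nonneg_left h1 (show (0:ℝ) ≤ (x - 1) * (x + 1)^2 by nlinarith),
    mul_le_mul_of_nonneg_left h2 (show (0:ℝ) ≤ x^2 - x - 1 by nlinarith)]

lemma q_anti (n : ℕ) (hn : 2 ≤ n) :
    ∀ m₁ m₂ : ℕ, 2 ≤ m₁ → m₁ < m₂ →
      ((m₂ : ℝ) - 1) / (m₂ : ℝ) ^ n < ((m₁ : ℝ) - 1) / (m₁ : ℝ) ^ n := by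
  intro m₁ m₂ hm₁ hlt
  induction m₂, hlt using Nat.le_induction with
  | base =>
    have := qstep n hn (m₁ : ℝ) (by exact_mod_cast hm₁)
    push_cast
    convert this using 3
  | succ m hm ih =>
    refine lt_trans ?_ ih
    have := qstep n hn (m : ℝ) (by exact_mod_cast (by omega : 2 ≤ m))
    push_cast
    convert this using 3

theorem pWH_strictAnti_in_m (n : ℕ) (hn : 2 ≤ n) :
    ∀ m₁ m₂ : ℕ, 2 ≤ m₁ → m₁ < m₂ → pWH n m₂ < pWH n m₁ := by
  intro m₁ m₂ hm₁ hlt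
  have hm₂ : 2 ≤ m₂ := by omega
  have hn1 : 1 ≤ n := by omega
  rw [pWH_eq n m₁ hn1 hm₁, pWH_eq n m₂ hn1 hm₂]
  have hM₁ : (2 : ℝ) ≤ (m₁ : ℝ) := by exact_mod_cast hm₁
  have hM₂ : (2 : ℝ) ≤ (m₂ : ℝ) := by exact_mod_cast hm₂
  -- facts about r
  have hr2 : (1 : ℝ) ≤ rWH n m₂ := by
    unfold rWH
    have : (0:ℝ) ≤ ((m₂ : ℝ) - 1) / (m₂ : ℝ) ^ n :=
      div_nonneg (by linarith) (by positivity)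
    linarith
  have hr : rWH n m₂ < rWH n m₁ := by
    unfold rWH
    exact add_lt_add_left (q_anti n hn m₁ m₂ hm₁ hlt) 1
  have hpow : rWH n m₂ ^ n < rWH n m₁ ^ n :=
    pow_lt_pow_left₀ hr (by linarith) (by omega)
  have hr2pow : (1 : ℝ) ≤ rWH n m₂ ^ n := one_le_pow₀ hr2
  -- facts about m^n
  have hA₁ : (1 : ℝ) < (m₁ : ℝ) ^ n := one_lt_pow₀ (by linarith) (by omega)
  have hA : (m₁ : ℝ) ^ n < (m₂ : ℝ) ^ n := by
    apply pow_lt_pow_left₀ (by exact_mod_cast hlt) (by linarith) (by omega)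
  have hdiv : (m₂ : ℝ) ^ n / ((m₂ : ℝ) ^ n - 1) < (m₁ : ℝ) ^ n / ((m₁ : ℝ) ^ n - 1) := by
    rw [div_lt_div_iff₀ (by linarith) (by linarith)]
    nlinarith
  have hA₂ : (1 : ℝ) < (m₂ : ℝ) ^ n := lt_trans hA₁ hA
  exact mul_lt_mul'' (by linarith) hdiv (by linarith)
    (le_of_lt (div_pos (by linarith) (by linarith)))
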